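/- arXiv:1306.4967 — 4 statements merged into one kernel-verified Lean document; each statement's English description precedes it below -/
import Mathlib

section
/- There exists a constant C' > 0 such that for every real a > 0, ∫_{ℝ} e^{-a cosh τ} dτ ≤ C' · (1 + |log a|) · e^{-a}. -/
open MeasureTheory Real Set

/-!
Since `cosh τ ≥ 1 + τ² / 2`, the integral is at most `√(2π / a) e^{-a}`, which settles
`a ≥ 1`. For `a < 1` the integrand is even; cut `[0, ∞)` at `T = log (2 / a)`. On `[0, T]`
the integrand is at most `e^{-a}`, contributing `T ≤ 1 + |log a|`; beyond `T`,
`a cosh τ ≥ e^{τ - T} ≥ 1 + (τ - T)`, so the tail contributes at most `e^{-1} ≤ e^{-a}`.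
-/

namespace Real

theorem one_add_sq_div_two_le_cosh (x : ℝ) : 1 + x ^ 2 / 2 ≤ cosh x := by
  have h := sum_le_hasSum ({0, 1} : Finset ℕ)
    (fun i _ => div_nonneg ((even_two_mul i).pow_nonneg x) (by positivity)) x.hasSum_cosh
  simpa [Finset.sum_insert] using h

theorem exp_div_two_le_cosh (x : ℝ) : exp x / 2 ≤ cosh x := by
  rw [cosh_eq]
  linarith [exp_pos (-x)]

end Real

section

variable {a : ℝ}

theorem exp_neg_mul_cosh_le_gaussian (ha : 0 ≤ a) (τ : ℝ) :
    exp (-a * cosh τ) ≤ exp (-a) * exp (-(a / 2) * τ ^ 2) := by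
  rw [← exp_add, exp_le_exp]
  nlinarith [one_add_sq_div_two_le_cosh τ]

theorem integrable_exp_neg_mul_cosh (ha : 0 < a) :
    Integrable (fun τ : ℝ => exp (-a * cosh τ)) := by
  refine ((integrable_exp_neg_mul_sq (half_pos ha)).const_mul (exp (-a))).mono' (by fun_prop) ?_
  filter_upwards with τ
  rw [norm_of_nonneg (exp_pos _).le]
  exact exp_neg_mul_cosh_le_gaussian ha.le τ

theorem integral_exp_neg_mul_cosh_le_sqrt (ha : 0 < a) :
    ∫ τ, exp (-a * cosh τ) ≤ √(π / (a / 2)) * exp (-a) := by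
  calc ∫ τ, exp (-a * cosh τ)
      ≤ ∫ τ, exp (-a) * exp (-(a / 2) * τ ^ 2) :=
        integral_mono (integrable_exp_neg_mul_cosh ha)
          ((integrable_exp_neg_mul_sq (half_pos ha)).const_mul _)
          (exp_neg_mul_cosh_le_gaussian ha.le)
    _ = √(π / (a / 2)) * exp (-a) := by rw [integral_const_mul, integral_gaussian, mul_comm]

theorem integral_exp_neg_mul_cosh_eq_two_mul_Ioi (a : ℝ) :
    ∫ τ, exp (-a * cosh τ) = 2 * ∫ τ in Ioi 0, exp (-a * cosh τ) := by
  simpa only [cosh_abs] using integral_comp_abs (f := fun τ => exp (-a * cosh τ))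

theorem setIntegral_Ioc_exp_neg_mul_cosh_le (ha : 0 ≤ a) {T : ℝ} (hT : 0 ≤ T) :
    ∫ τ in Ioc 0 T, exp (-a * cosh τ) ≤ T * exp (-a) := by
  have hpt : ∀ τ ∈ Ioc 0 T, ‖exp (-a * cosh τ)‖ ≤ exp (-a) := fun τ _ => by
    rw [norm_of_nonneg (exp_pos _).le, exp_le_exp]
    nlinarith [one_le_cosh τ]
  have h := norm_setIntegral_le_of_norm_le_const (μ := volume) measure_Ioc_lt_top hpt
  rw [Real.volume_real_Ioc_of_le hT, sub_zero, mul_comm] at h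
  exact (le_abs_self _).trans h

theorem setIntegral_Ioi_exp_neg_mul_cosh_le (ha : 0 < a) (T : ℝ) :
    ∫ τ in Ioi T, exp (-a * cosh τ) ≤ exp (-(a * exp T / 2)) / (a * exp T / 2) := by
  set b := a * exp T / 2 with hb
  have hb_pos : 0 < b := by positivity
  -- `a cosh τ ≥ b e^{τ - T} ≥ b (1 + τ - T)`: the tail is dominated by an exponential
  have hdom : ∀ τ ∈ Ioi T, exp (-a * cosh τ) ≤ exp (b * T - b) * exp (-b * τ) := by
    intro τ _
    have hexp : a * exp τ / 2 = b * exp (τ - T) := by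
      rw [hb, exp_sub]; field_simp
    rw [← exp_add, exp_le_exp]
    nlinarith [exp_div_two_le_cosh τ, add_one_le_exp (τ - T)]
  have hint : IntegrableOn (fun τ => exp (b * T - b) * exp (-b * τ)) (Ioi T) :=
    (exp_neg_integrableOn_Ioi T hb_pos).const_mul _
  calc ∫ τ in Ioi T, exp (-a * cosh τ)
      ≤ ∫ τ in Ioi T, exp (b * T - b) * exp (-b * τ) :=
        setIntegral_mono_on (integrable_exp_neg_mul_cosh ha).integrableOn hint
          measurableSet_Ioi hdom
    _ = exp (-b) / b := by
        rw [integral_const_mul, integral_exp_mul_Ioi (neg_lt_zero.2 hb_pos), ← mul_div_assoc,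
          mul_neg, neg_div_neg_eq, ← exp_add]
        ring_nf

theorem integral_exp_neg_mul_cosh_le_cutoff (ha : 0 < a) {T : ℝ} (hT : 0 ≤ T) :
    ∫ τ, exp (-a * cosh τ) ≤
      2 * (T * exp (-a) + exp (-(a * exp T / 2)) / (a * exp T / 2)) := by
  have hint := (integrable_exp_neg_mul_cosh ha).integrableOn (s := Ioc 0 T)
  rw [integral_exp_neg_mul_cosh_eq_two_mul_Ioi, ← Ioc_union_Ioi_eq_Ioi hT,
    setIntegral_union Ioc_disjoint_Ioi_same measurableSet_Ioi hint
      (integrable_exp_neg_mul_cosh ha).integrableOn]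
  gcongr
  · exact setIntegral_Ioc_exp_neg_mul_cosh_le ha.le hT
  · exact setIntegral_Ioi_exp_neg_mul_cosh_le ha T

end

/-- There exists `C' > 0` such that for all `a > 0`,
`∫ ℝ e^{-a cosh τ} dτ ≤ C' (1 + |log a|) e^{-a}`. -/
theorem cosh_integral_log_bound :
    ∃ C' : ℝ, 0 < C' ∧ ∀ a : ℝ, 0 < a →
      (∫ τ : ℝ, Real.exp (-a * Real.cosh τ)) ≤ C' * (1 + |Real.log a|) * Real.exp (-a) := by
  refine ⟨4, by norm_num, fun a ha => ?_⟩
  have hlog := abs_nonneg (log a)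
  rcases le_or_gt 1 a with ha1 | ha1
  · have hsqrt : √(π / (a / 2)) ≤ 4 := by
      rw [sqrt_le_left (by norm_num), div_le_iff₀ (by positivity)]
      nlinarith [pi_le_four]
    calc ∫ τ, exp (-a * cosh τ) ≤ √(π / (a / 2)) * exp (-a) :=
          integral_exp_neg_mul_cosh_le_sqrt ha
      _ ≤ 4 * (1 + |log a|) * exp (-a) := by gcongr; linarith
  · have hT : 0 ≤ log (2 / a) := log_nonneg (by rw [le_div_iff₀ ha]; linarith)
    have hb : a * exp (log (2 / a)) / 2 = 1 := by rw [exp_log (by positivity)]; field_simp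
    have hTle : log (2 / a) ≤ 1 + |log a| := by
      rw [log_div two_ne_zero ha.ne']
      linarith [neg_le_abs (log a), log_two_lt_d9]
    have he : exp (-1) ≤ exp (-a) := exp_le_exp.2 (by linarith)
    calc ∫ τ, exp (-a * cosh τ) ≤ 2 * (log (2 / a) * exp (-a) + exp (-1) / 1) := by
          simpa only [hb] using integral_exp_neg_mul_cosh_le_cutoff ha hT
      _ ≤ 4 * (1 + |log a|) * exp (-a) := by nlinarith [exp_pos (-a)]
end

section
/- For λ, μ, x_p, x_{p+1}, x'_p, x'_{p+1} real, one has the exchange identity ∫_{ℝ} V_{λ,+}(x_{p+1}−y) V_{λ,−}(x_p−y) V_{μ,+}(y−x'_p) V_{μ,−}(y−x'_{p+1}) dy = (cosh[(x_p−x'_p)/2] / cosh[(x_{p+1}−x'_{p+1})/2])^{(i/ℏ)(λ−μ)} · ∫_{ℝ} V_{μ,+}(x_{p+1}−y) V_{μ,−}(x_p−y) V_{λ,+}(y−x'_p) V_{λ,−}(y−x'_{p+1}) dy. -/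
open MeasureTheory Real Complex

/-- `V_{λ,+}(x) = exp{-(1/ℏ) e^{x} + iλx/(2ℏ)}`. -/
noncomputable def Vplus (ℏ : ℝ) (lam : ℝ) (x : ℝ) : ℂ :=
  Complex.exp (↑(-(1 / ℏ) * Real.exp x) + Complex.I * ↑lam * ↑x / (2 * ↑ℏ))

/-- `V_{λ,-}(x) = exp{-(1/ℏ) e^{-x} + iλx/(2ℏ)}`. -/
noncomputable def Vminus (ℏ : ℝ) (lam : ℝ) (x : ℝ) : ℂ :=
  Complex.exp (↑(-(1 / ℏ) * Real.exp (-x)) + Complex.I * ↑lam * ↑x / (2 * ↑ℏ))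

/-!
With `A = e^{x_{p+1}} + e^{x'_{p+1}}` and `B = e^{-x_p} + e^{-x'_p}`, the integrand is
`exp(-(A e^{-y} + B e^{y})/ℏ)` times a phase linear in `y`. The reflection `y ↦ c - y` with
`e^c = A / B` fixes this potential and turns the phase of the left integrand into that of the right
one (`λ` and `μ` exchanged) times the constant `e^{i(λ-μ)(s/2 - c)/ℏ}`, where
`s = x_p + x_{p+1} + x'_p + x'_{p+1}`. Since `2 cosh((a - b)/2) = e^{(a+b)/2}(e^{-a} + e^{-b})`,
that constant is the stated power of the cosh ratio.
-/

lemma two_mul_cosh_half_sub (a b : ℝ) :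
    2 * Real.cosh ((a - b) / 2) = Real.exp ((a + b) / 2) * (Real.exp (-a) + Real.exp (-b)) := by
  rw [Real.cosh_eq, mul_add, ← Real.exp_add, ← Real.exp_add]
  ring_nf

lemma cosh_half_sub_div_cosh_half_sub (xp xq xp' xq' c : ℝ)
    (hc : Real.exp c * (Real.exp (-xp) + Real.exp (-xp')) = Real.exp xq + Real.exp xq') :
    Real.cosh ((xp - xp') / 2) / Real.cosh ((xq - xq') / 2)
      = Real.exp ((xp + xq + xp' + xq') / 2 - c) := by
  have hq := two_mul_cosh_half_sub (-xq) (-xq')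
  rw [show (-xq - -xq') / 2 = -((xq - xq') / 2) by ring, Real.cosh_neg, neg_neg, neg_neg] at hq
  rw [div_eq_iff (Real.cosh_pos _).ne']
  apply mul_left_cancel₀ (two_ne_zero' ℝ)
  rw [two_mul_cosh_half_sub, mul_left_comm, hq, ← hc, ← mul_assoc, ← mul_assoc,
    ← Real.exp_add, ← Real.exp_add]
  ring_nf

lemma ofReal_exp_cpow (r : ℝ) (w : ℂ) : (↑(Real.exp r) : ℂ) ^ w = Complex.exp (r * w) := by
  rw [cpow_def_of_ne_zero (by exact_mod_cast (Real.exp_pos r).ne'),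
    ← ofReal_log (Real.exp_pos r).le, Real.log_exp]

lemma mul_exp_neg_sub_add_mul_exp_sub {A B c : ℝ} (hc : Real.exp c * B = A) (y : ℝ) :
    A * Real.exp (-(c - y)) + B * Real.exp (c - y) = A * Real.exp (-y) + B * Real.exp y := by
  rw [← hc, neg_sub, Real.exp_sub, Real.exp_sub, Real.exp_neg]
  field_simp
  ring

section ExchangeIntegrand

variable (ℏ lam mu xp xq xp' xq' : ℝ)

noncomputable def exchangeIntegrand (y : ℝ) : ℂ :=
  Vplus ℏ lam (xq - y) * Vminus ℏ lam (xp - y)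
    * Vplus ℏ mu (y - xp') * Vminus ℏ mu (y - xq')

lemma exchangeIntegrand_eq_exp (y : ℝ) :
    exchangeIntegrand ℏ lam mu xp xq xp' xq' y
      = Complex.exp (↑(-(1 / ℏ) * ((Real.exp xq + Real.exp xq') * Real.exp (-y)
            + (Real.exp (-xp) + Real.exp (-xp')) * Real.exp y))
          + I * ↑(lam * (xp + xq - 2 * y) + mu * (2 * y - xp' - xq')) / (2 * ℏ)) := by
  have hpot : Real.exp (xq - y) + Real.exp (-(xp - y)) + Real.exp (y - xp') + Real.exp (-(y - xq'))
      = (Real.exp xq + Real.exp xq') * Real.exp (-y)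
        + (Real.exp (-xp) + Real.exp (-xp')) * Real.exp y := by
    simp only [neg_sub, Real.exp_sub, Real.exp_neg]
    field_simp
    ring
  simp only [exchangeIntegrand, Vplus, Vminus, ← Complex.exp_add, ← hpot]
  congr 1
  push_cast
  ring

lemma exchangeIntegrand_sub_left {c : ℝ}
    (hc : Real.exp c * (Real.exp (-xp) + Real.exp (-xp')) = Real.exp xq + Real.exp xq') (y : ℝ) :
    exchangeIntegrand ℏ lam mu xp xq xp' xq' (c - y)
      = Complex.exp (↑((xp + xq + xp' + xq') / 2 - c) * (I / ℏ * (lam - mu)))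
        * exchangeIntegrand ℏ mu lam xp xq xp' xq' y := by
  rw [exchangeIntegrand_eq_exp, exchangeIntegrand_eq_exp, ← Complex.exp_add,
    mul_exp_neg_sub_add_mul_exp_sub hc]
  congr 1
  push_cast
  ring

end ExchangeIntegrand

theorem exchange_four_V_general (ℏ : ℝ)
    (lam mu xp xq xp' xq' : ℝ) :
    (∫ y : ℝ, Vplus ℏ lam (xq - y) * Vminus ℏ lam (xp - y)
        * Vplus ℏ mu (y - xp') * Vminus ℏ mu (y - xq'))
      = (↑(Real.cosh ((xp - xp') / 2) / Real.cosh ((xq - xq') / 2)) : ℂ)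
          ^ ((Complex.I / ↑ℏ) * (↑lam - ↑mu))
        * ∫ y : ℝ, Vplus ℏ mu (xq - y) * Vminus ℏ mu (xp - y)
            * Vplus ℏ lam (y - xp') * Vminus ℏ lam (y - xq') := by
  obtain ⟨c, hc⟩ :
      ∃ c, Real.exp c * (Real.exp (-xp) + Real.exp (-xp')) = Real.exp xq + Real.exp xq' :=
    ⟨Real.log ((Real.exp xq + Real.exp xq') / (Real.exp (-xp) + Real.exp (-xp'))),
      by rw [Real.exp_log (by positivity), div_mul_cancel₀ _ (by positivity)]⟩
  rw [cosh_half_sub_div_cosh_half_sub xp xq xp' xq' c hc, ofReal_exp_cpow]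
  calc (∫ y, exchangeIntegrand ℏ lam mu xp xq xp' xq' y)
      = ∫ y, exchangeIntegrand ℏ lam mu xp xq xp' xq' (c - y) :=
        (integral_sub_left_eq_self _ volume c).symm
    _ = ∫ y, Complex.exp (↑((xp + xq + xp' + xq') / 2 - c) * (I / ℏ * (lam - mu)))
          * exchangeIntegrand ℏ mu lam xp xq xp' xq' y := by
        simp only [exchangeIntegrand_sub_left ℏ lam mu xp xq xp' xq' hc]
    _ = _ := integral_const_mul _ _

/-- The exchange identity for products of four `V` functions. -/
theorem exchange_four_V (ℏ : ℝ) (hℏ : 0 < ℏ)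
    (lam mu xp xq xp' xq' : ℝ) :
    (∫ y : ℝ, Vplus ℏ lam (xq - y) * Vminus ℏ lam (xp - y)
        * Vplus ℏ mu (y - xp') * Vminus ℏ mu (y - xq'))
      = (↑(Real.cosh ((xp - xp') / 2) / Real.cosh ((xq - xq') / 2)) : ℂ)
          ^ ((Complex.I / ↑ℏ) * (↑lam - ↑mu))
        * ∫ y : ℝ, Vplus ℏ mu (xq - y) * Vminus ℏ mu (xp - y)
            * Vplus ℏ lam (y - xp') * Vminus ℏ lam (y - xq') :=
  exchange_four_V_general ℏ lam mu xp xq xp' xq'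
end

section
/- For pairwise distinct real numbers w₁,…,w_N and y₁,…,y_k (k ≤ N) and α > 0, one has the partial-fraction identity: ∏_{r>ℓ}(y_r − y_ℓ) · ∏_{r=1}^{k} ∏_{ℓ=1}^{N} (y_r − w_ℓ + iα)^{−1} = Σ over pairwise-distinct indices b₁,…,b_k ∈ {1,…,N} of [∏_{r=1}^{k} ∏_{ℓ ∉ {b₁,…,b_k}} (w_{b_r} − w_ℓ)^{−1}] · [∏_{r<ℓ} (w_{b_r} − w_{b_ℓ})^{−1}] · [∏_{s=1}^{k} (y_s − w_{b_s} + iα)^{−1}]. -/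
/-!
Put `z_r = y_r + iα`, which is never a node `w_l`. The left side is `det V(z) · ∏_r ∏_l (z_r - w_l)⁻¹`,
the determinant of the `k × k` matrix with entries `z_r ^ m / ∏_l (z_r - w_l)`. As `m < k ≤ N`,
Lagrange interpolation of `X ^ m` at the nodes `w` gives the barycentric expansion
`z ^ m / ∏_l (z - w_l) = ∑_j c_j w_j ^ m / (z - w_j)` with weights `c_j = ∏_{l ≠ j} (w_j - w_l)⁻¹`,
so this matrix is the product of a `k × N` and an `N × k` matrix. Expanding the determinant of the
product row by row (Cauchy–Binet) leaves a sum over injections `b` of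
`∏_r c_{b_r} / (z_r - w_{b_r})` times the Vandermonde determinant of `(w_{b_r})_r`. In each
`c_{b_r}` the factors with `l = b_{r'}` combine with that determinant to
`∏_{r < r'} (w_{b_r} - w_{b_{r'}})⁻¹`, and the factors with `l` outside the image of `b` remain.
-/

open Complex Finset

namespace Finset

theorem prod_prod_erase_eq_prod_lt_mul_prod_gt {ι M : Type*} [Fintype ι] [LinearOrder ι]
    [CommMonoid M] (g : ι → ι → M) :
    ∏ i, ∏ j ∈ univ.erase i, g i j
      = (∏ p ∈ univ.filter (fun p : ι × ι => p.1 < p.2), g p.1 p.2)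
        * ∏ p ∈ univ.filter (fun p : ι × ι => p.2 < p.1), g p.1 p.2 := by
  simp only [prod_filter, Fintype.prod_prod_type, ← prod_mul_distrib, ← filter_ne']
  refine prod_congr rfl fun i _ => prod_congr rfl fun j _ => ?_
  rcases lt_trichotomy i j with h | rfl | h
  · simp [h, h.ne', h.not_gt]
  · simp
  · simp [h, h.ne, h.not_gt]

end Finset

namespace Matrix

section CauchyBinet

variable {m n R : Type*} [Fintype m] [DecidableEq m] [Fintype n] [CommRing R]

theorem det_mul_eq_sum_prod_mul_det_submatrix (A : Matrix m n R) (B : Matrix n m R) :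
    (A * B).det = ∑ g : m → n, (∏ i, A i (g i)) * (B.submatrix g id).det := by
  have hrows : (A * B : m → m → R) = fun i => ∑ j, A i j • (B j : m → R) := by
    ext i j
    simp [mul_apply, Finset.sum_apply]
  rw [det, hrows, ← AlternatingMap.coe_multilinearMap, MultilinearMap.map_sum]
  refine Fintype.sum_congr _ _ fun g => ?_
  rw [AlternatingMap.coe_multilinearMap, AlternatingMap.map_smul_univ, smul_eq_mul]
  rfl

theorem det_mul_eq_sum_embedding_prod_mul_det_submatrix (A : Matrix m n R) (B : Matrix n m R) :
    (A * B).det = ∑ g : m ↪ n, (∏ i, A i (g i)) * (B.submatrix g id).det := by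
  let coe : (m ↪ n) ↪ (m → n) := ⟨(⇑), DFunLike.coe_injective⟩
  rw [det_mul_eq_sum_prod_mul_det_submatrix]
  refine ((sum_map univ coe _).symm.trans (sum_subset (subset_univ _) fun g _ hg => ?_)).symm
  obtain ⟨i, j, hgij, hij⟩ := Function.not_injective_iff.mp fun hinj =>
    hg (mem_map.mpr ⟨⟨g, hinj⟩, mem_univ _, rfl⟩)
  rw [det_zero_of_row_eq hij (by ext; simp [hgij]), mul_zero]

end CauchyBinet

theorem det_vandermonde_eq_prod_filter_gt {R : Type*} [CommRing R] {n : ℕ} (v : Fin n → R) :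
    (vandermonde v).det
      = ∏ p ∈ univ.filter (fun p : Fin n × Fin n => p.2 < p.1), (v p.1 - v p.2) := by
  rw [det_vandermonde, prod_filter, Fintype.prod_prod_type, prod_comm]
  simp only [← filter_lt_eq_Ioi, prod_filter]

end Matrix

namespace Lagrange

open Matrix

variable {F : Type*} [Field F]

theorem sum_nodalWeight_mul_inv_sub_mul_pow {ι : Type*} [DecidableEq ι] {s : Finset ι}
    {v : ι → F} (hvs : Set.InjOn v s) {m : ℕ} (hm : m < #s) {x : F} (hx : ∀ i ∈ s, x ≠ v i) :
    ∑ i ∈ s, nodalWeight s v i * (x - v i)⁻¹ * v i ^ m = x ^ m * ∏ i ∈ s, (x - v i)⁻¹ := by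
  have hinterp : interpolate s v (fun i => v i ^ m) = Polynomial.X ^ m := by
    simpa using (eq_interpolate (f := Polynomial.X ^ m) hvs (by simpa using hm)).symm
  have h := eval_interpolate_not_at_node (fun i => v i ^ m) hx
  rw [hinterp, Polynomial.eval_pow, Polynomial.eval_X, eval_nodal] at h
  rw [prod_inv_distrib, h, mul_comm,
    inv_mul_cancel_left₀ (prod_ne_zero_iff.mpr fun i hi => sub_ne_zero.mpr (hx i hi))]

theorem nodalWeight_univ_embedding_apply {ι κ : Type*} [Fintype ι] [DecidableEq ι] [Fintype κ]
    [DecidableEq κ] (W : κ → F) (b : ι ↪ κ) (r : ι) :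
    nodalWeight univ W (b r)
      = (∏ l ∈ (univ.map b)ᶜ, (W (b r) - W l)⁻¹) * nodalWeight univ (W ∘ b) r := by
  have hsplit : univ.erase (b r) = (univ.map b)ᶜ.disjUnion ((univ.erase r).map b)
      (disjoint_compl_left.mono_right (map_subset_map.mpr (erase_subset r univ))) := by
    ext l
    by_cases hl : l ∈ univ.map b
    · obtain ⟨r', -, rfl⟩ := mem_map.mp hl
      simp [b.injective.eq_iff, eq_comm]
    · simp_all [eq_comm]
  rw [nodalWeight, hsplit, prod_disjUnion, prod_map]
  rfl

theorem prod_nodalWeight_mul_det_vandermonde {n : ℕ} (v : Fin n → F)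
    (hv : Function.Injective v) :
    (∏ r, nodalWeight univ v r) * (vandermonde v).det
      = ∏ p ∈ univ.filter (fun p : Fin n × Fin n => p.1 < p.2), (v p.1 - v p.2)⁻¹ := by
  have hne : ∏ p ∈ univ.filter (fun p : Fin n × Fin n => p.2 < p.1), (v p.1 - v p.2) ≠ 0 :=
    prod_ne_zero_iff.mpr fun p hp => sub_ne_zero.mpr (hv.ne (mem_filter.mp hp).2.ne')
  simp only [nodalWeight]
  rw [prod_prod_erase_eq_prod_lt_mul_prod_gt, det_vandermonde_eq_prod_filter_gt]
  simp only [prod_inv_distrib]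
  rw [mul_assoc, inv_mul_cancel₀ hne, mul_one]

variable {κ : Type*} [Fintype κ] [DecidableEq κ] {k : ℕ}

theorem det_vandermonde_mul_prod_prod_inv_sub_eq_sum_nodalWeight (W : κ → F)
    (hW : Function.Injective W) (hk : k ≤ Fintype.card κ) (z : Fin k → F)
    (hz : ∀ r l, z r ≠ W l) :
    (vandermonde z).det * ∏ r, ∏ l, (z r - W l)⁻¹
      = ∑ b : Fin k ↪ κ,
          (∏ r, nodalWeight univ W (b r) * (z r - W (b r))⁻¹) * (vandermonde (W ∘ b)).det := by
  let A : Matrix (Fin k) κ F := of fun r l => nodalWeight univ W l * (z r - W l)⁻¹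
  let B : Matrix κ (Fin k) F := of fun l j => W l ^ (j : ℕ)
  have hAB : A * B = diagonal (fun r => ∏ l, (z r - W l)⁻¹) * vandermonde z := by
    ext r j
    rw [diagonal_mul, vandermonde_apply, mul_comm, mul_apply]
    exact sum_nodalWeight_mul_inv_sub_mul_pow hW.injOn (j.2.trans_le hk) fun l _ => hz r l
  calc (vandermonde z).det * ∏ r, ∏ l, (z r - W l)⁻¹ = (A * B).det := by
        rw [hAB, det_mul, det_diagonal, mul_comm]
    _ = _ := det_mul_eq_sum_embedding_prod_mul_det_submatrix A B

theorem det_vandermonde_mul_prod_prod_inv_sub_eq_sum_embedding (W : κ → F)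
    (hW : Function.Injective W) (hk : k ≤ Fintype.card κ) (z : Fin k → F)
    (hz : ∀ r l, z r ≠ W l) :
    (vandermonde z).det * ∏ r, ∏ l, (z r - W l)⁻¹
      = ∑ b : Fin k ↪ κ,
          (∏ r, ∏ l ∈ univ.filter (fun l => ∀ r', b r' ≠ l), (W (b r) - W l)⁻¹)
          * (∏ p ∈ univ.filter (fun p : Fin k × Fin k => p.1 < p.2), (W (b p.1) - W (b p.2))⁻¹)
          * ∏ s, (z s - W (b s))⁻¹ := by
  rw [det_vandermonde_mul_prod_prod_inv_sub_eq_sum_nodalWeight W hW hk z hz]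
  refine sum_congr rfl fun b _ => ?_
  have hb := prod_nodalWeight_mul_det_vandermonde (W ∘ b) (hW.comp b.injective)
  have hcompl : (univ.map b)ᶜ = univ.filter (fun l => ∀ r', b r' ≠ l) := by ext; simp
  simp only [Function.comp_apply] at hb
  rw [← hb]
  simp only [prod_mul_distrib, nodalWeight_univ_embedding_apply, hcompl]
  ring

end Lagrange

theorem partial_fraction_identity_general (N k : ℕ) (hk : k ≤ N)
    (w : Fin N → ℝ) (hw : Function.Injective w)
    (y : Fin k → ℝ)
    (α : ℝ) (hα : 0 < α) :
    (∏ p ∈ Finset.univ.filter (fun p : Fin k × Fin k => p.2 < p.1),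
        ((y p.1 : ℂ) - (y p.2 : ℂ)))
      * ∏ r : Fin k, ∏ l : Fin N, ((y r : ℂ) - (w l : ℂ) + Complex.I * α)⁻¹
    = ∑ b : Fin k ↪ Fin N,
        (∏ r : Fin k, ∏ l ∈ Finset.univ.filter (fun l : Fin N => ∀ r' : Fin k, b r' ≠ l),
            ((w (b r) : ℂ) - (w l : ℂ))⁻¹)
        * (∏ p ∈ Finset.univ.filter (fun p : Fin k × Fin k => p.1 < p.2),
            ((w (b p.1) : ℂ) - (w (b p.2) : ℂ))⁻¹)
        * ∏ s : Fin k, ((y s : ℂ) - (w (b s) : ℂ) + Complex.I * α)⁻¹ := by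
  have hz : ∀ r l, (y r : ℂ) + I * α ≠ w l := fun r l h => by
    simpa [hα.ne'] using congrArg im h
  have h := Lagrange.det_vandermonde_mul_prod_prod_inv_sub_eq_sum_embedding (fun l => (w l : ℂ))
    (ofReal_injective.comp hw) (by simpa using hk) (fun r => (y r : ℂ) + I * α) hz
  simp only [Matrix.det_vandermonde_eq_prod_filter_gt, add_sub_add_right_eq_sub] at h
  simpa only [add_sub_right_comm] using h

/-- Partial-fraction identity: for pairwise distinct reals `w₁,…,w_N`, `y₁,…,y_k`
(`k ≤ N`) and `α > 0`,
`∏_{r>ℓ}(y_r - y_ℓ) ∏_{r,ℓ}(y_r - w_ℓ + iα)⁻¹`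
equals the sum over injections `b : {1,…,k} ↪ {1,…,N}` of
`∏_{r}∏_{ℓ∉im b}(w_{b_r}-w_ℓ)⁻¹ ∏_{r<ℓ}(w_{b_r}-w_{b_ℓ})⁻¹ ∏_s (y_s - w_{b_s} + iα)⁻¹`. -/
theorem partial_fraction_identity (N k : ℕ) (hk : k ≤ N)
    (w : Fin N → ℝ) (hw : Function.Injective w)
    (y : Fin k → ℝ) (hy : Function.Injective y)
    (α : ℝ) (hα : 0 < α) :
    (∏ p ∈ Finset.univ.filter (fun p : Fin k × Fin k => p.2 < p.1),
        ((y p.1 : ℂ) - (y p.2 : ℂ)))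
      * ∏ r : Fin k, ∏ l : Fin N, ((y r : ℂ) - (w l : ℂ) + Complex.I * α)⁻¹
    = ∑ b : Fin k ↪ Fin N,
        (∏ r : Fin k, ∏ l ∈ Finset.univ.filter (fun l : Fin N => ∀ r' : Fin k, b r' ≠ l),
            ((w (b r) : ℂ) - (w l : ℂ))⁻¹)
        * (∏ p ∈ Finset.univ.filter (fun p : Fin k × Fin k => p.1 < p.2),
            ((w (b p.1) : ℂ) - (w (b p.2) : ℂ))⁻¹)
        * ∏ s : Fin k, ((y s : ℂ) - (w (b s) : ℂ) + Complex.I * α)⁻¹ :=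
  partial_fraction_identity_general N k hk w hw y α hα
end

section
/- Let ℏ > 0 and φ_{y₁}(x₁) = e^{(i/ℏ)x₁y₁}, and define by the Mellin–Barnes recursion φ_{(y₁,y₂)}(x₁,x₂) = ∫_{ℝ−iα} e^{(i/ℏ)(y₁+y₂−w)x₂} φ_w(x₁) ℏ^{(i/ℏ)(2w−y₁−y₂)} Γ((y₁−w)/(iℏ)) Γ((y₂−w)/(iℏ)) dw/(2πℏ) for any α > 0. Then φ_{(y₁,y₂)}(x₁,x₂) is independent of α, and it equals the Gauss–Givental representation ∫_ℝ Λ^{(2)}_{y₁}((x₁,x₂) | τ) · e^{(i/ℏ)τ y₂} dτ, where Λ^{(2)}_{y}((x₁,x₂)|τ) = e^{(iy/2ℏ)(x₁+x₂)} V_{y,−}(x₁−τ) V_{y,+}(x₂−τ). -/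
open MeasureTheory Real Complex

open FourierTransform

/-!
Put `w = t - iα = ℏ (s - i c)` with `c = α / ℏ`: both Gamma factors then live on the vertical
line `Re z = c`. Expanding one of them as `Γ(z) = ∫ exp (z v - e^v) dv` and exchanging the
integrals, the `s`-integral of the other one is a Fourier inversion, since `Γ(c + 2πiξ)` is the
Fourier transform of `v ↦ exp (-c v - e^{-v})`:
`∫ Γ(c + i s) e^{i s a} ds = 2π exp (-c a - e^{-a})`.
The `c`-dependence then cancels, and after the shift `τ = v + x₁ + log ℏ` the remaining
`v`-integral is the Gauss–Givental integral.
-/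

lemma integrable_inv_sq_add_sq {c : ℝ} (hc : 0 < c) :
    Integrable fun s : ℝ => (c ^ 2 + s ^ 2)⁻¹ := by
  refine ((integrable_inv_one_add_sq.comp_div hc.ne').const_mul (c ^ 2)⁻¹).congr <|
    .of_forall fun s => ?_
  field_simp

namespace Complex

lemma abs_exp_smul_GammaIntegrand_exp (s : ℂ) (v : ℝ) :
    |Real.exp v| • ((Real.exp (-Real.exp v) : ℂ) * (Real.exp v : ℂ) ^ (s - 1))
      = cexp (s * v - Real.exp v) := by
  rw [abs_of_pos (Real.exp_pos v), real_smul, ofReal_exp, ofReal_exp,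
    cpow_def_of_ne_zero (exp_ne_zero _), log_exp (by simp [pi_pos]) (by simp [pi_pos.le]),
    ← exp_add, ← exp_add]
  congr 1
  push_cast
  ring

lemma integrable_cexp_mul_sub_exp {s : ℂ} (hs : 0 < s.re) :
    Integrable (fun v : ℝ => cexp (s * v - Real.exp v)) := by
  have h := GammaIntegral_convergent hs
  rw [← Real.range_exp, ← Set.image_univ, integrableOn_image_iff_integrableOn_abs_deriv_smul
    MeasurableSet.univ (fun x _ => (Real.hasDerivAt_exp x).hasDerivWithinAt)
    Real.exp_injective.injOn, integrableOn_univ] at h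
  simpa only [abs_exp_smul_GammaIntegrand_exp] using h

lemma Gamma_eq_integral_cexp_mul_sub_exp {s : ℂ} (hs : 0 < s.re) :
    Gamma s = ∫ v : ℝ, cexp (s * v - Real.exp v) := by
  rw [Gamma_eq_integral hs, GammaIntegral, ← Real.range_exp, ← Set.image_univ,
    integral_image_eq_integral_abs_deriv_smul MeasurableSet.univ
      (fun x _ => (Real.hasDerivAt_exp x).hasDerivWithinAt) Real.exp_injective.injOn,
    setIntegral_univ]
  simp only [abs_exp_smul_GammaIntegrand_exp]

lemma norm_Gamma_le_Gamma_re {s : ℂ} (hs : 0 < s.re) : ‖Gamma s‖ ≤ Real.Gamma s.re := by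
  rw [Gamma_eq_integral hs, Real.Gamma_eq_integral hs]
  refine (norm_integral_le_integral_norm _).trans <|
    setIntegral_mono_on (GammaIntegral_convergent hs).norm (Real.GammaIntegral_convergent hs)
      measurableSet_Ioi fun x hx => ?_
  rw [norm_mul, norm_cpow_eq_rpow_re_of_pos hx, norm_real, Real.norm_eq_abs, sub_re, one_re,
    abs_of_pos (Real.exp_pos _)]

lemma norm_Gamma_add_mul_I_le {c : ℝ} (hc : 0 < c) (s : ℝ) :
    ‖Gamma (c + s * I)‖ ≤ Real.Gamma (c + 2) / (c ^ 2 + s ^ 2) := by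
  set z : ℂ := c + s * I
  have hre : z.re = c := by simp [z]
  have hz : z ≠ 0 := fun h => by rw [h, zero_re] at hre; linarith
  have hz₁ : z + 1 ≠ 0 := fun h => by
    have := congrArg re h
    rw [add_re, hre, one_re, zero_re] at this
    linarith
  have hnorm : ‖z‖ ^ 2 = c ^ 2 + s ^ 2 := by
    rw [← normSq_eq_norm_sq, normSq_add_mul_I]
  have hnorm₁ : ‖z‖ ≤ ‖z + 1‖ := by
    have : z + 1 = (c + 1 : ℝ) + s * I := by push_cast; ring
    rw [← sq_le_sq₀ (norm_nonneg _) (norm_nonneg _), hnorm, this, ← normSq_eq_norm_sq,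
      normSq_add_mul_I]
    nlinarith
  have hrec : Gamma (z + 2) = z * (z + 1) * Gamma z := by
    rw [show z + 2 = z + 1 + 1 by ring, Gamma_add_one _ hz₁, Gamma_add_one _ hz]; ring
  have hbound : ‖Gamma (z + 2)‖ ≤ Real.Gamma (c + 2) := by
    simpa [hre] using norm_Gamma_le_Gamma_re (s := z + 2) (by simp [hre]; linarith)
  rw [le_div_iff₀ (by positivity), ← hnorm]
  calc ‖Gamma z‖ * ‖z‖ ^ 2 ≤ ‖Gamma z‖ * (‖z‖ * ‖z + 1‖) := by
        rw [sq]; gcongr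
    _ = ‖Gamma (z + 2)‖ := by rw [hrec, norm_mul, norm_mul]; ring
    _ ≤ Real.Gamma (c + 2) := hbound

lemma continuous_Gamma_add_mul_I {c : ℝ} (hc : 0 < c) :
    Continuous fun s : ℝ => Gamma (c + s * I) := by
  refine continuous_iff_continuousAt.2 fun s => ?_
  refine ContinuousAt.comp (g := Gamma) ?_ (by fun_prop)
  refine (differentiableAt_Gamma _ fun m h => ?_).continuousAt
  have : c = -m := by simpa using congrArg re h
  linarith [(m.cast_nonneg : (0 : ℝ) ≤ m)]

lemma integrable_Gamma_add_mul_I {c : ℝ} (hc : 0 < c) :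
    Integrable fun s : ℝ => Gamma (c + s * I) := by
  refine ((integrable_inv_sq_add_sq hc).const_mul (Real.Gamma (c + 2))).mono'
    (continuous_Gamma_add_mul_I hc).aestronglyMeasurable (.of_forall fun s => ?_)
  simpa only [div_eq_mul_inv] using norm_Gamma_add_mul_I_le hc s

lemma integral_Gamma_add_mul_I_mul_cexp {c : ℝ} (hc : 0 < c) (a : ℝ) :
    ∫ s : ℝ, Gamma (c + s * I) * cexp (s * a * I) = 2 * π * cexp (-(c * a) - Real.exp (-a)) := by
  set f : ℝ → ℂ := fun v => cexp (-(c * v) - Real.exp (-v))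
  have hf_cont : Continuous f := by fun_prop
  have hf_int : Integrable f := by
    simpa [f, neg_mul, ← sub_eq_add_neg] using
      (integrable_cexp_mul_sub_exp (s := c) (by simpa using hc)).comp_neg
  have hFf : 𝓕 f = fun ξ => Gamma (c + (2 * π * ξ : ℝ) * I) := by
    ext ξ
    rw [Real.fourier_real_eq_integral_exp_smul,
      Gamma_eq_integral_cexp_mul_sub_exp (by simpa using hc), ← integral_neg_eq_self]
    congr 1 with v
    rw [smul_eq_mul, ← exp_add]
    congr 1
    push_cast
    simp only [neg_neg]
    ring
  have hFf_int : Integrable (𝓕 f) := by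
    rw [hFf]
    exact (integrable_Gamma_add_mul_I hc).comp_mul_left' (by positivity)
  have hinv := hf_int.fourierInv_fourier_eq hFf_int hf_cont.continuousAt (v := a)
  rw [Real.fourierInv_eq', hFf] at hinv
  set g : ℝ → ℂ := fun s => Gamma (c + s * I) * cexp (s * a * I)
  have hinv' : ∫ ξ : ℝ, g (2 * π * ξ) = f a := by
    rw [← hinv]
    congr 1 with ξ
    simp only [g, Real.inner_apply, smul_eq_mul]
    push_cast
    ring_nf
  rw [Measure.integral_comp_mul_left, abs_of_pos (by positivity),
    inv_smul_eq_iff₀ (by positivity)] at hinv'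
  rw [hinv', real_smul]
  push_cast
  simp [f]

lemma integral_Gamma_add_sub_mul_I_mul_cexp {c : ℝ} (hc : 0 < c) (b a : ℝ) :
    ∫ s : ℝ, Gamma (c + (s - b) * I) * cexp (s * a * I)
      = 2 * π * cexp (b * a * I - c * a - Real.exp (-a)) := by
  have hshift : ∀ s : ℝ, Gamma (c + ((s + b : ℝ) - b) * I) * cexp ((s + b : ℝ) * a * I)
      = Gamma (c + s * I) * cexp (s * a * I) * cexp (b * a * I) := by
    intro s
    rw [ofReal_add, add_sub_cancel_right, mul_assoc (Gamma _), ← exp_add]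
    ring_nf
  rw [← integral_add_right_eq_self _ b]
  simp only [hshift]
  rw [integral_mul_const, integral_Gamma_add_mul_I_mul_cexp hc, mul_assoc, ← exp_add]
  ring_nf

lemma integrable_Gamma_add_sub_mul_I {c : ℝ} (hc : 0 < c) (b : ℝ) :
    Integrable fun s : ℝ => Gamma (c + (s - b) * I) := by
  simpa using (integrable_Gamma_add_mul_I hc).comp_sub_right b

lemma continuous_Gamma_add_sub_mul_I {c : ℝ} (hc : 0 < c) (b : ℝ) :
    Continuous fun s : ℝ => Gamma (c + (s - b) * I) :=
  ((continuous_Gamma_add_mul_I hc).comp (continuous_sub_right b)).congr fun s => by simp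

theorem integral_Gamma_mul_Gamma_mul_cexp {c : ℝ} (hc : 0 < c) (a b A : ℝ) :
    ∫ s : ℝ, Gamma (c + (s - a) * I) * Gamma (c + (s - b) * I) * cexp (s * A * I)
      = 2 * π * cexp (b * A * I - c * A)
          * ∫ v : ℝ, cexp ((b - a) * v * I - Real.exp v - Real.exp (-(A + v))) := by
  set F : ℝ → ℝ → ℂ := fun s v =>
    Gamma (c + (s - b) * I) * cexp (s * A * I) * cexp ((c + (s - a) * I) * v - Real.exp v)
  have hexpand : ∀ s : ℝ, Gamma (c + (s - a) * I) * Gamma (c + (s - b) * I) * cexp (s * A * I)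
      = ∫ v : ℝ, F s v := by
    intro s
    rw [mul_assoc, Gamma_eq_integral_cexp_mul_sub_exp (by simpa using hc), ← integral_mul_const]
    simp only [F]
    congr 1 with v
    ring
  have hF : Integrable (Function.uncurry F) (volume.prod volume) := by
    refine ((integrable_Gamma_add_sub_mul_I hc b).norm.mul_prod
      (integrable_cexp_mul_sub_exp (s := c) (by simpa using hc)).norm).mono'
      (Continuous.aestronglyMeasurable <|
        (((continuous_Gamma_add_sub_mul_I hc b).comp continuous_fst).mul (by fun_prop)).mul
          (by fun_prop))
      (.of_forall fun ⟨s, v⟩ => le_of_eq ?_)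
    simp [F, norm_exp, exp_ofReal_re]
  have hinner : ∀ v : ℝ, ∫ s : ℝ, F s v
      = 2 * π * cexp (b * A * I - c * A)
        * cexp ((b - a) * v * I - Real.exp v - Real.exp (-(A + v))) := by
    intro v
    have hF_eq : ∀ s : ℝ, F s v = Gamma (c + (s - b) * I) * cexp (s * (A + v : ℝ) * I)
        * cexp ((c - a * I) * v - Real.exp v) := by
      intro s
      simp only [F, ofReal_add, mul_assoc, ← exp_add]
      ring_nf
    simp_rw [hF_eq, integral_mul_const, integral_Gamma_add_sub_mul_I_mul_cexp hc, mul_assoc,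
      ← exp_add]
    congr 3
    push_cast
    ring
  simp_rw [hexpand]
  rw [integral_integral_swap hF]
  simp_rw [hinner]
  exact integral_const_mul _ _

end Complex

lemma mellinBarnes_integrand_eq {ℏ : ℝ} (hℏ : 0 < ℏ) (y₁ y₂ x₁ x₂ α t : ℝ) :
    Complex.exp ((Complex.I / ↑ℏ) * (↑y₁ + ↑y₂ - (↑t - Complex.I * ↑α)) * ↑x₂)
        * Complex.exp ((Complex.I / ↑ℏ) * (↑t - Complex.I * ↑α) * ↑x₁)
        * (↑ℏ : ℂ) ^ ((Complex.I / ↑ℏ) * (2 * (↑t - Complex.I * ↑α) - ↑y₁ - ↑y₂))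
        * Complex.Gamma ((↑y₁ - (↑t - Complex.I * ↑α)) / (Complex.I * ↑ℏ))
        * Complex.Gamma ((↑y₂ - (↑t - Complex.I * ↑α)) / (Complex.I * ↑ℏ))
        / (2 * ↑π * ↑ℏ)
      = cexp ((y₁ + y₂) * (x₂ - Real.log ℏ) / ℏ * I
            + (α / ℏ : ℝ) * (x₁ - x₂ + 2 * Real.log ℏ : ℝ)) / (2 * π * ℏ)
        * (Gamma ((α / ℏ : ℝ) + ((t / ℏ : ℝ) - (y₁ / ℏ : ℝ)) * I)
          * Gamma ((α / ℏ : ℝ) + ((t / ℏ : ℝ) - (y₂ / ℏ : ℝ)) * I)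
          * cexp ((t / ℏ : ℝ) * (x₁ - x₂ + 2 * Real.log ℏ : ℝ) * I)) := by
  have hℏ' : (ℏ : ℂ) ≠ 0 := ofReal_ne_zero.2 hℏ.ne'
  have hGamma_arg : ∀ y : ℝ, (↑y - (↑t - I * ↑α)) / (I * ↑ℏ)
      = ((α / ℏ : ℝ) : ℂ) + ((t / ℏ : ℝ) - (y / ℏ : ℝ)) * I := by
    intro y
    push_cast
    field_simp
    ring_nf
    rw [I_sq]
    ring
  have hphase : cexp (I / ℏ * (↑y₁ + ↑y₂ - (↑t - I * ↑α)) * ↑x₂)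
      * cexp (I / ℏ * (↑t - I * ↑α) * ↑x₁)
      * (↑ℏ : ℂ) ^ (I / ℏ * (2 * (↑t - I * ↑α) - ↑y₁ - ↑y₂))
      = cexp ((y₁ + y₂) * (x₂ - Real.log ℏ) / ℏ * I
          + (α / ℏ : ℝ) * (x₁ - x₂ + 2 * Real.log ℏ : ℝ))
        * cexp ((t / ℏ : ℝ) * (x₁ - x₂ + 2 * Real.log ℏ : ℝ) * I) := by
    rw [cpow_def_of_ne_zero hℏ', ← ofReal_log hℏ.le, ← Complex.exp_add, ← Complex.exp_add,
      ← Complex.exp_add]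
    congr 1
    push_cast
    field_simp
    ring_nf
    rw [I_sq]
    ring
  rw [hGamma_arg, hGamma_arg, hphase]
  ring

lemma gaussGivental_integrand_eq {ℏ : ℝ} (hℏ : 0 < ℏ) (y₁ y₂ x₁ x₂ v τ : ℝ)
    (hτ : τ = v + (x₁ + Real.log ℏ)) :
    Complex.exp (Complex.I * ↑y₁ / (2 * ↑ℏ) * (↑x₁ + ↑x₂))
        * Complex.exp (↑(-(1 / ℏ) * Real.exp (-(x₁ - τ)))
            + Complex.I * ↑y₁ * (↑x₁ - ↑τ) / (2 * ↑ℏ))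
        * Complex.exp (↑(-(1 / ℏ) * Real.exp (x₂ - τ))
            + Complex.I * ↑y₁ * (↑x₂ - ↑τ) / (2 * ↑ℏ))
        * Complex.exp ((Complex.I / ↑ℏ) * ↑τ * ↑y₂)
      = cexp ((y₁ + y₂) * (x₂ - Real.log ℏ) / ℏ * I
          + (y₂ / ℏ : ℝ) * (x₁ - x₂ + 2 * Real.log ℏ : ℝ) * I)
        * cexp (((y₂ / ℏ : ℝ) - (y₁ / ℏ : ℝ)) * v * I - Real.exp v
          - Real.exp (-(x₁ - x₂ + 2 * Real.log ℏ + v))) := by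
  have hℏ' : (ℏ : ℂ) ≠ 0 := ofReal_ne_zero.2 hℏ.ne'
  have hleft : Real.exp (-(x₁ - τ)) = ℏ * Real.exp v := by
    rw [hτ, show -(x₁ - (v + (x₁ + Real.log ℏ))) = Real.log ℏ + v by ring, Real.exp_add,
      Real.exp_log hℏ]
  have hright : Real.exp (x₂ - τ) = ℏ * Real.exp (-(x₁ - x₂ + 2 * Real.log ℏ + v)) := by
    rw [hτ, show x₂ - (v + (x₁ + Real.log ℏ))
        = Real.log ℏ + -(x₁ - x₂ + 2 * Real.log ℏ + v) by ring, Real.exp_add, Real.exp_log hℏ]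
  rw [hleft, hright, ← Complex.exp_add, ← Complex.exp_add, ← Complex.exp_add, ← Complex.exp_add,
    hτ]
  congr 1
  push_cast
  field_simp
  ring

/-- Equivalence of the Mellin–Barnes and Gauss–Givental representations for `N = 2`:
for any `α > 0`, the Mellin–Barnes integral over the line `ℝ - iα` equals the
Gauss–Givental integral (in particular it is independent of `α`). -/
theorem mellin_barnes_eq_gauss_givental (ℏ : ℝ) (hℏ : 0 < ℏ)
    (y₁ y₂ x₁ x₂ : ℝ) :
    ∀ α : ℝ, 0 < α →
      (∫ t : ℝ,
          Complex.exp ((Complex.I / ↑ℏ) * (↑y₁ + ↑y₂ - (↑t - Complex.I * ↑α)) * ↑x₂)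
            * Complex.exp ((Complex.I / ↑ℏ) * (↑t - Complex.I * ↑α) * ↑x₁)
            * (↑ℏ : ℂ) ^ ((Complex.I / ↑ℏ) * (2 * (↑t - Complex.I * ↑α) - ↑y₁ - ↑y₂))
            * Complex.Gamma ((↑y₁ - (↑t - Complex.I * ↑α)) / (Complex.I * ↑ℏ))
            * Complex.Gamma ((↑y₂ - (↑t - Complex.I * ↑α)) / (Complex.I * ↑ℏ))
            / (2 * ↑π * ↑ℏ))
        = ∫ τ : ℝ,
            Complex.exp (Complex.I * ↑y₁ / (2 * ↑ℏ) * (↑x₁ + ↑x₂))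
              * Complex.exp (↑(-(1 / ℏ) * Real.exp (-(x₁ - τ)))
                  + Complex.I * ↑y₁ * (↑x₁ - ↑τ) / (2 * ↑ℏ))
              * Complex.exp (↑(-(1 / ℏ) * Real.exp (x₂ - τ))
                  + Complex.I * ↑y₁ * (↑x₂ - ↑τ) / (2 * ↑ℏ))
              * Complex.exp ((Complex.I / ↑ℏ) * ↑τ * ↑y₂) := by
  intro α hα
  set A : ℝ := x₁ - x₂ + 2 * Real.log ℏ
  set f : ℝ → ℂ := fun s => Gamma ((α / ℏ : ℝ) + (s - (y₁ / ℏ : ℝ)) * I)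
    * Gamma ((α / ℏ : ℝ) + (s - (y₂ / ℏ : ℝ)) * I) * cexp (s * A * I)
  calc _ = ∫ t : ℝ, cexp ((y₁ + y₂) * (x₂ - Real.log ℏ) / ℏ * I + (α / ℏ : ℝ) * A)
          / (2 * π * ℏ) * f (t / ℏ) :=
        integral_congr_ae (.of_forall fun t => mellinBarnes_integrand_eq hℏ y₁ y₂ x₁ x₂ α t)
    _ = cexp ((y₁ + y₂) * (x₂ - Real.log ℏ) / ℏ * I + (α / ℏ : ℝ) * A)
          / (2 * π * ℏ) * (ℏ * ∫ s : ℝ, f s) := by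
        rw [integral_const_mul, Measure.integral_comp_div, abs_of_pos hℏ, real_smul]
    _ = cexp ((y₁ + y₂) * (x₂ - Real.log ℏ) / ℏ * I + (y₂ / ℏ : ℝ) * A * I)
          * ∫ v : ℝ, cexp (((y₂ / ℏ : ℝ) - (y₁ / ℏ : ℝ)) * v * I - Real.exp v
            - Real.exp (-(A + v))) := by
        have hℏ' : (ℏ : ℂ) ≠ 0 := ofReal_ne_zero.2 hℏ.ne'
        have hπ : (π : ℂ) ≠ 0 := ofReal_ne_zero.2 pi_ne_zero
        rw [integral_Gamma_mul_Gamma_mul_cexp (div_pos hα hℏ), div_mul_eq_mul_div,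
          div_eq_iff (by simp [hℏ', hπ])]
        have hphase : cexp ((y₁ + y₂) * (x₂ - Real.log ℏ) / ℏ * I + (α / ℏ : ℝ) * A)
            * cexp ((y₂ / ℏ : ℝ) * A * I - (α / ℏ : ℝ) * A)
            = cexp ((y₁ + y₂) * (x₂ - Real.log ℏ) / ℏ * I + (y₂ / ℏ : ℝ) * A * I) := by
          rw [← Complex.exp_add]; ring_nf
        rw [← hphase]
        ring
    _ = _ := by
        rw [← integral_const_mul]
        exact integral_congr_ae (.of_forall fun v =>
          (gaussGivental_integrand_eq hℏ y₁ y₂ x₁ x₂ v _ rfl).symm)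
    _ = _ := integral_add_right_eq_self _ _
end
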